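/- Let A ∈ M_n(𝕋) be irreducible and ultimately periodic with period 1: there exist λ ∈ ℝ and k₀ ∈ ℕ such that A^(k+1) = λ ⊗ A^(k) for all k ≥ k₀. Then for every k ≥ k₀, e^(A) ⊗ A^(k) = E(λ) ⊗ A^(k); in particular every column of A^(k) is an eigenvector of e^(A) for eigenvalue E(λ). -/

import Mathlib

noncomputable section

/-- Max-plus (tropical) matrix product over `𝕋 = ℝ ∪ {−∞}`, embedded in `EReal`. -/
def mpMul {ι κ μ : Type*} (A : Matrix ι κ EReal) (B : Matrix κ μ EReal) :
    Matrix ι μ EReal :=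
  fun i j => ⨆ k, A i k + B k j

/-- Max-plus identity matrix. -/
def mpId {ι : Type*} [DecidableEq ι] : Matrix ι ι EReal :=
  fun i j => if i = j then (0 : EReal) else ⊥

/-- Max-plus matrix power, `mpPow A 0 = mpId`. -/
def mpPow {ι : Type*} [DecidableEq ι] (A : Matrix ι ι EReal) : ℕ → Matrix ι ι EReal
  | 0 => mpId
  | k + 1 => mpMul (mpPow A k) A

/-- Tropical scalar multiple: add the real scalar `c` to every entry. -/
def smulE {ι κ : Type*} (c : ℝ) (A : Matrix ι κ EReal) : Matrix ι κ EReal :=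
  fun i j => (c : EReal) + A i j

/-- Max-plus matrix-vector product. -/
def mpMulVec {ι κ : Type*} (A : Matrix ι κ EReal) (x : κ → EReal) : ι → EReal :=
  fun i => ⨆ j, A i j + x j

/-- The tropical factorial `k! = 1 ⊗ 2 ⊗ ⋯ ⊗ k = k(k+1)/2`. -/
def tfact (k : ℕ) : ℝ := k * (k + 1) / 2

/-- The tropical matrix exponential `e^(A) = ⨁_{k ≥ 0} (−k(k+1)/2) ⊗ A^(k)`. -/
def mexp {ι : Type*} [DecidableEq ι] (A : Matrix ι ι EReal) : Matrix ι ι EReal :=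
  fun i j => ⨆ k : ℕ, (((-(tfact k) : ℝ) : EReal) + mpPow A k i j)

/-- The scalar tropical exponential `E(a) = sup_k (k·a − k(k+1)/2)`. -/
def Escalar (a : ℝ) : ℝ := ⨆ k : ℕ, ((k : ℝ) * a - tfact k)

/-- Irreducibility: the digraph of `A` is strongly connected. -/
def mpIrreducible {ι : Type*} (A : Matrix ι ι EReal) : Prop :=
  ∀ i j, Relation.TransGen (fun u v => A u v ≠ ⊥) i j

/-- Robustness: the orbit of every nonzero vector over `𝕋` hits an eigenvector. -/
def mpRobust {n : ℕ} (A : Matrix (Fin n) (Fin n) EReal) : Prop :=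
  ∀ x : Fin n → EReal, (∀ i, x i ≠ ⊤) → x ≠ (fun _ => ⊥) →
    ∃ (r : ℕ) (lam : ℝ),
      mpMulVec (mpPow A r) x ≠ (fun _ => ⊥) ∧
      mpMulVec A (mpMulVec (mpPow A r) x) =
        fun i => (lam : EReal) + mpMulVec (mpPow A r) x i

/-- The weight of the closed walk `c 0 → c 1 → ⋯ → c m → c 0`. -/
def cycWeight {ι : Type*} {m : ℕ} (A : Matrix ι ι EReal) (c : Fin (m + 1) → ι) : EReal :=
  ∑ i : Fin (m + 1), A (c i) (c (i + 1))

/-- `c` is a cycle (closed walk) in the digraph of `A`. -/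
def isCycle {ι : Type*} {m : ℕ} (A : Matrix ι ι EReal) (c : Fin (m + 1) → ι) : Prop :=
  ∀ i, A (c i) (c (i + 1)) ≠ ⊥

/-- `lam` is the maximum cycle mean `λ(A)`: attained by some cycle and an upper bound. -/
def isMaxCycleMean {ι : Type*} (A : Matrix ι ι EReal) (lam : ℝ) : Prop :=
  (∃ (m : ℕ) (c : Fin (m + 1) → ι), isCycle A c ∧
      cycWeight A c = ((((m : ℝ) + 1) * lam : ℝ) : EReal)) ∧
  ∀ (m : ℕ) (c : Fin (m + 1) → ι), isCycle A c →
      cycWeight A c ≤ ((((m : ℝ) + 1) * lam : ℝ) : EReal)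

/-- A critical cycle: a cycle whose mean equals `lam = λ(A)`. -/
def isCritCycle {ι : Type*} {m : ℕ} (A : Matrix ι ι EReal) (lam : ℝ)
    (c : Fin (m + 1) → ι) : Prop :=
  isCycle A c ∧ cycWeight A c = ((((m : ℝ) + 1) * lam : ℝ) : EReal)

/-- `v` is a vertex of the critical digraph `C(A)`. -/
def critVertex {ι : Type*} (A : Matrix ι ι EReal) (lam : ℝ) (v : ι) : Prop :=
  ∃ (m : ℕ) (c : Fin (m + 1) → ι) (k : Fin (m + 1)), isCritCycle A lam c ∧ c k = v

/-- `u → v` is an edge of the critical digraph `C(A)`. -/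
def critEdge {ι : Type*} (A : Matrix ι ι EReal) (lam : ℝ) (u v : ι) : Prop :=
  ∃ (m : ℕ) (c : Fin (m + 1) → ι) (k : Fin (m + 1)),
    isCritCycle A lam c ∧ c k = u ∧ c (k + 1) = v

/-- `u` and `v` lie in the same strongly connected component of `C(A)`. -/
def sameCritSCC {ι : Type*} (A : Matrix ι ι EReal) (lam : ℝ) (u v : ι) : Prop :=
  Relation.ReflTransGen (critEdge A lam) u v ∧ Relation.ReflTransGen (critEdge A lam) v u

/-- Adding a real constant is an order isomorphism of `EReal`. -/
def erealAddIso (r : ℝ) : EReal ≃o EReal where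
  toFun x := (r : EReal) + x
  invFun x := ((-r : ℝ) : EReal) + x
  left_inv x := by
    show ((-r : ℝ) : EReal) + ((r : EReal) + x) = x
    rw [← add_assoc, ← EReal.coe_add]
    norm_num
  right_inv x := by
    show (r : EReal) + (((-r : ℝ) : EReal) + x) = x
    rw [← add_assoc, ← EReal.coe_add]
    norm_num
  map_rel_iff' := by
    intro x y
    show (r : EReal) + x ≤ (r : EReal) + y ↔ x ≤ y
    constructor
    · intro h
      have := add_le_add_right h ((-r : ℝ) : EReal)
      rwa [← add_assoc, ← add_assoc, ← EReal.coe_add, neg_add_cancel, EReal.coe_zero,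
        zero_add, zero_add] at this
    · intro h
      exact add_le_add_right h _

lemma ereal_add_iSup {ι : Sort*} (x : EReal) (hx : x ≠ ⊤) (f : ι → EReal) :
    x + ⨆ i, f i = ⨆ i, x + f i := by
  induction x with
  | bot => simp [EReal.bot_add]
  | coe r => exact (erealAddIso r).map_iSup f
  | top => exact absurd rfl hx

lemma ereal_iSup_add {ι : Sort*} (f : ι → EReal) (x : EReal) (hx : x ≠ ⊤) :
    (⨆ i, f i) + x = ⨆ i, f i + x := by
  rw [add_comm, ereal_add_iSup x hx]
  simp [add_comm]

lemma mpMul_ne_top {ι κ μ : Type*} [Finite κ] {A : Matrix ι κ EReal} {B : Matrix κ μ EReal}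
    (hA : ∀ i j, A i j ≠ ⊤) (hB : ∀ i j, B i j ≠ ⊤) :
    ∀ i j, mpMul A B i j ≠ ⊤ := by
  intro i j
  rcases isEmpty_or_nonempty κ with h | h
  · simp [mpMul, iSup_of_empty]
  · have : ∀ k, A i k + B k j < ⊤ := fun k => EReal.add_lt_top (hA i k) (hB k j)
    obtain ⟨k₀, hk₀⟩ := Finite.exists_max (fun k => A i k + B k j)
    have hle : mpMul A B i j ≤ A i k₀ + B k₀ j := iSup_le hk₀
    exact (hle.trans_lt (EReal.add_lt_top (hA i k₀) (hB k₀ j))).ne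

lemma mpPow_ne_top {ι : Type*} [DecidableEq ι] [Finite ι] {A : Matrix ι ι EReal}
    (hA : ∀ i j, A i j ≠ ⊤) : ∀ k i j, mpPow A k i j ≠ ⊤ := by
  intro k
  induction k with
  | zero => intro i j; simp only [mpPow, mpId]; split <;> simp
  | succ k ih => exact mpMul_ne_top ih hA

lemma mpMul_mpId {ι κ : Type*} [DecidableEq κ] (A : Matrix ι κ EReal) :
    mpMul A mpId = A := by
  funext i j
  unfold mpMul mpId
  apply le_antisymm
  · apply iSup_le
    intro k
    by_cases h : k = j
    · subst h; simp
    · simp [h, EReal.add_bot]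
  · have := le_iSup (fun k => A i k + if k = j then (0 : EReal) else ⊥) j
    simpa using this

lemma mpMul_assoc {ι κ μ ν : Type*} [Nonempty κ] [Nonempty μ]
    {A : Matrix ι κ EReal} {B : Matrix κ μ EReal} {C : Matrix μ ν EReal}
    (hA : ∀ i j, A i j ≠ ⊤) (hC : ∀ i j, C i j ≠ ⊤) :
    mpMul (mpMul A B) C = mpMul A (mpMul B C) := by
  funext i j
  unfold mpMul
  calc (⨆ l, (⨆ m, A i m + B m l) + C l j)
      = ⨆ l, ⨆ m, (A i m + B m l) + C l j := by
        refine iSup_congr fun l => ?_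
        exact ereal_iSup_add _ _ (hC l j)
    _ = ⨆ m, ⨆ l, A i m + (B m l + C l j) := by
        rw [iSup_comm]
        exact iSup_congr fun m => iSup_congr fun l => add_assoc _ _ _
    _ = ⨆ m, A i m + ⨆ l, (B m l + C l j) :=
        iSup_congr fun m => (ereal_add_iSup _ (hA i m) _).symm

lemma mpPow_add {ι : Type*} [DecidableEq ι] [Nonempty ι] [Finite ι] {A : Matrix ι ι EReal}
    (hA : ∀ i j, A i j ≠ ⊤) (m k : ℕ) :
    mpPow A (m + k) = mpMul (mpPow A m) (mpPow A k) := by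
  induction k with
  | zero => simp [mpPow, mpMul_mpId]
  | succ k ih =>
    show mpPow A (m + k + 1) = _
    rw [show mpPow A (m + k + 1) = mpMul (mpPow A (m + k)) A from rfl, ih,
      mpMul_assoc (mpPow_ne_top hA m) hA]
    rfl

lemma smulE_smulE {ι κ : Type*} (a b : ℝ) (A : Matrix ι κ EReal) :
    smulE a (smulE b A) = smulE (a + b) A := by
  funext i j
  simp only [smulE, EReal.coe_add, add_assoc]

lemma escalar_bdd (lam : ℝ) : BddAbove (Set.range fun k : ℕ => (k : ℝ) * lam - tfact k) := by
  refine ⟨lam ^ 2 / 2, ?_⟩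
  rintro x ⟨k, rfl⟩
  have h1 : (0 : ℝ) ≤ ((k : ℝ) - lam) ^ 2 := sq_nonneg _
  have h2 : (0 : ℝ) ≤ (k : ℝ) := Nat.cast_nonneg k
  simp only [tfact]
  nlinarith

lemma escalar_coe (lam : ℝ) :
    ((Escalar lam : ℝ) : EReal) = ⨆ k : ℕ, (((k : ℝ) * lam - tfact k : ℝ) : EReal) := by
  unfold Escalar
  exact Monotone.map_ciSup_of_continuousAt (continuous_coe_real_ereal.continuousAt)
    (fun _ _ h => EReal.coe_le_coe_iff.mpr h) (escalar_bdd lam)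

theorem stmt_11 {n : ℕ} (A : Matrix (Fin n) (Fin n) EReal)
    (hA : ∀ i j, A i j ≠ ⊤) (hirr : mpIrreducible A)
    (lam : ℝ) (k₀ : ℕ)
    (hper : ∀ k, k₀ ≤ k → mpPow A (k + 1) = smulE lam (mpPow A k)) :
    ∀ k, k₀ ≤ k →
      mpMul (mexp A) (mpPow A k) = smulE (Escalar lam) (mpPow A k) ∧
      ∀ j, mpMulVec (mexp A) (fun i => mpPow A k i j) =
        fun i => ((Escalar lam : ℝ) : EReal) + mpPow A k i j := by
  intro k hk
  rcases Nat.eq_zero_or_pos n with hn | hn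
  · subst hn
    constructor
    · funext i; exact absurd i.2 (by omega)
    · intro j; exact absurd j.2 (by omega)
  have : Nonempty (Fin n) := ⟨⟨0, hn⟩⟩
  -- shift lemma
  have hshift : ∀ m : ℕ, mpPow A (m + k) = smulE ((m : ℝ) * lam) (mpPow A k) := by
    intro m
    induction m with
    | zero =>
      funext i j
      simp [smulE]
    | succ m ih =>
      have h1 : mpPow A (m + k + 1) = smulE lam (mpPow A (m + k)) := hper (m + k) (by omega)
      have : mpPow A (m + 1 + k) = mpPow A (m + k + 1) := by rw [Nat.add_right_comm]
      rw [this, h1, ih, smulE_smulE,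
        show lam + (m : ℝ) * lam = ((m + 1 : ℕ) : ℝ) * lam by push_cast; ring]
  have hmain : mpMul (mexp A) (mpPow A k) = smulE (Escalar lam) (mpPow A k) := by
    funext i j
    have hPk : ∀ l j', mpPow A k l j' ≠ ⊤ := fun l j' => mpPow_ne_top hA k l j'
    calc mpMul (mexp A) (mpPow A k) i j
        = ⨆ l, (⨆ m : ℕ, (((-(tfact m) : ℝ) : EReal) + mpPow A m i l)) + mpPow A k l j := rfl
      _ = ⨆ l, ⨆ m : ℕ, ((((-(tfact m) : ℝ) : EReal) + mpPow A m i l) + mpPow A k l j) :=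
          iSup_congr fun l => ereal_iSup_add _ _ (hPk l j)
      _ = ⨆ m : ℕ, ⨆ l, (((-(tfact m) : ℝ) : EReal) + (mpPow A m i l + mpPow A k l j)) := by
          rw [iSup_comm]
          exact iSup_congr fun m => iSup_congr fun l => add_assoc _ _ _
      _ = ⨆ m : ℕ, (((-(tfact m) : ℝ) : EReal) + ⨆ l, (mpPow A m i l + mpPow A k l j)) :=
          iSup_congr fun m => (ereal_add_iSup _ (by simp) _).symm
      _ = ⨆ m : ℕ, (((-(tfact m) : ℝ) : EReal) + mpPow A (m + k) i j) := by
          refine iSup_congr fun m => ?_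
          rw [mpPow_add hA m k]
          rfl
      _ = ⨆ m : ℕ, ((((m : ℝ) * lam - tfact m : ℝ) : EReal) + mpPow A k i j) := by
          refine iSup_congr fun m => ?_
          rw [hshift m]
          show _ = _
          simp only [smulE]
          rw [← add_assoc, ← EReal.coe_add]
          congr 2
          ring
      _ = (⨆ m : ℕ, (((m : ℝ) * lam - tfact m : ℝ) : EReal)) + mpPow A k i j :=
          (ereal_iSup_add _ _ (hPk i j)).symm
      _ = ((Escalar lam : ℝ) : EReal) + mpPow A k i j := by rw [escalar_coe]
  refine ⟨hmain, fun j => ?_⟩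
  funext i
  exact congrFun (congrFun hmain i) j

end
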